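/- Let 𝒢 = 𝒢(G,H,S) be a strongly connected Cayley coset digraph whose generators are distinct double-coset representatives. Let R₁ and R₂ be a partition of S (R₁ ∪ R₂ = S, R₁ ∩ R₂ = ∅) such that the subgroup G' generated by H ∪ R₁ contains no element of R₂. Let 𝒢' = 𝒢(G',H,R₁). Suppose that for all r, s ∈ R₂, if G'rG' = G'sG' then the subgroup generated by H ∪ {r} equals the subgroup generated by H ∪ {s}. Then κ(𝒢) ≥ min(|G'/H|, κ(𝒢') + d_{R₂}), where d_{R₂} = Σ_{s∈R₂} |HsH/H|. -/

import Mathlib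

open Classical

/-- A digraph (given by its edge relation `E`) is strongly connected iff for every
ordered pair of vertices there is a directed path from the first to the second. -/
def SC {V : Type*} (E : V → V → Prop) : Prop :=
  ∀ a b : V, Relation.ReflTransGen E a b

/-- The subdigraph induced on `A` is strongly connected. -/
def SCOn {V : Type*} (E : V → V → Prop) (A : Set V) : Prop :=
  ∀ a ∈ A, ∀ b ∈ A, Relation.ReflTransGen (fun x y => x ∈ A ∧ y ∈ A ∧ E x y) a b

/-- Out-neighborhood of a set of vertices. -/
def Nout {V : Type*} (E : V → V → Prop) (A : Set V) : Set V :=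
  {x | x ∉ A ∧ ∃ y ∈ A, E y x}

/-- Vertex connectivity: the least cardinality of a set `T` of vertices whose removal
leaves a non-strongly-connected digraph; `Nat.card V - 1` if no such `T` exists. -/
noncomputable def kappa {V : Type*} [Finite V] (E : V → V → Prop) : ℕ :=
  if ∃ T : Set V, ¬ SCOn E Tᶜ then
    sInf {m | ∃ T : Set V, T.ncard = m ∧ ¬ SCOn E Tᶜ}
  else Nat.card V - 1

/-- A part of a digraph. -/
def IsPart {V : Type*} (E : V → V → Prop) (A : Set V) : Prop :=
  A.Nonempty ∧ ((A ∪ Nout E A)ᶜ : Set V).Nonempty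

/-- An atom: a part with `|N(A)| = κ` of minimum cardinality among such parts. -/
def IsAtomD {V : Type*} [Finite V] (E : V → V → Prop) (A : Set V) : Prop :=
  IsPart E A ∧ (Nout E A).ncard = kappa E ∧
    ∀ B : Set V, IsPart E B → (Nout E B).ncard = kappa E → A.ncard ≤ B.ncard
/-- The double coset `K s K`. -/
def dcoset {G : Type*} [Group G] (K : Subgroup G) (s : G) : Set G :=
  {g | ∃ h₁ ∈ K, ∃ h₂ ∈ K, g = h₁ * s * h₂}

/-- Edge relation of the Cayley coset digraph `𝒢(G,H,S)` on the left cosets `G ⧸ H`: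
there is an edge from `g₁H` to `g₂H` iff `g₁⁻¹g₂ ∈ HsH` for some `s ∈ S`
(equivalently, `g₁Hs ∩ g₂H ≠ ∅`). -/
def cayleyRel {G : Type*} [Group G] (H : Subgroup G) (S : Set G) :
    G ⧸ H → G ⧸ H → Prop :=
  fun x y => ∃ s ∈ S, ∃ g₁ g₂ : G, (g₁ : G ⧸ H) = x ∧ (g₂ : G ⧸ H) = y ∧
    g₁⁻¹ * g₂ ∈ dcoset H s

/-- `d_s = |HsH/H|`, the number of left cosets of `H` contained in `HsH`. -/
noncomputable def dval {G : Type*} [Group G] (H : Subgroup G) (s : G) : ℕ :=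
  ((QuotientGroup.mk '' dcoset H s : Set (G ⧸ H))).ncard

/- Hamidoune's atom method. The coset digraph is invariant under left translation by `G`, and
replacing `S` by `S⁻¹` reverses it while preserving all hypotheses, so we may assume that its
atoms (smallest parts `A` with `|N(A)| = κ`) are no larger than those of the reverse digraph.
Then a translate of an atom either equals it or misses it, so the atom through `H` is `K/H` for
a subgroup `K ≥ H`, and it remains to bound the out-neighbourhood `N` of `K/H` from below.
If `G'/H ⊆ K/H ∪ N`, then `N` contains `G'/H \ K/H` and, outside `G'/H`, either a nonempty
`K`-invariant set or a translate of `G'/H \ K/H`; this gives `|N| ≥ |G'/H|`. Otherwise `(K ∩ G')/H` is a part of `𝒢'`, so `N` has at least `κ(𝒢')` points in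
`G'/H`. Outside `G'/H`, the cosets in `HtH` for `t ∈ R₂ \ K` lie in `N`; those for `t ∈ R₂ ∩ K`
lie in `K/H` but are matched, `G'`-coset by `G'`-coset, with translates of `N ∩ G'/H`. The
condition on `G'`-double cosets keeps the two kinds of generators in different `G'`-cosets. -/

open Relation Pointwise

section Digraph

variable {V : Type*} {E : V → V → Prop}

theorem scOn_flip_iff {A : Set V} : SCOn (flip E) A ↔ SCOn E A := by
  have key : ∀ {R : V → V → Prop}, SCOn R A → SCOn (flip R) A := fun h a ha b hb =>
    ReflTransGen.mono (fun _ _ hxy => ⟨hxy.2.1, hxy.1, hxy.2.2⟩) _ _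
      (reflTransGen_swap.2 (h b hb a ha))
  exact ⟨key, key⟩

theorem kappa_flip [Finite V] : kappa (flip E) = kappa E := by
  simp only [kappa, scOn_flip_iff]

theorem kappa_le_ncard_of_not_scOn [Finite V] {T : Set V} (hT : ¬ SCOn E Tᶜ) :
    kappa E ≤ T.ncard := by
  rw [kappa, if_pos ⟨T, hT⟩]
  exact Nat.sInf_le ⟨T, rfl, hT⟩

theorem exists_not_reflTransGen_of_not_scOn {A : Set V} (h : ¬ SCOn E A) :
    ∃ a ∈ A, ∃ b ∈ A, ¬ ReflTransGen (fun x y => x ∈ A ∧ y ∈ A ∧ E x y) a b := by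
  simpa [SCOn] using h

theorem exists_isPart_Nout_subset_of_not_scOn {T : Set V} (hT : ¬ SCOn E Tᶜ) :
    ∃ A : Set V, IsPart E A ∧ Nout E A ⊆ T := by
  obtain ⟨a, ha, b, hb, hab⟩ := exists_not_reflTransGen_of_not_scOn hT
  let A : Set V := {x | ReflTransGen (fun x y => x ∈ Tᶜ ∧ y ∈ Tᶜ ∧ E x y) a x}
  have hAT : A ⊆ Tᶜ := fun x hx => by
    induction hx with
    | refl => exact ha
    | tail _ step _ => exact step.2.1
  have hN : Nout E A ⊆ T := fun x ⟨hxA, y, hy, hyx⟩ => by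
    by_contra hxT
    exact hxA (ReflTransGen.tail hy ⟨hAT hy, hxT, hyx⟩)
  exact ⟨A, ⟨⟨a, .refl⟩, b, by rintro (h | h); exacts [hab h, hb (hN h)]⟩, hN⟩

theorem IsPart.not_scOn_compl_Nout {A : Set V} (hA : IsPart E A) : ¬ SCOn E (Nout E A)ᶜ := by
  obtain ⟨⟨a, ha⟩, b, hb⟩ := hA
  intro h
  have hstay : ∀ x,
      ReflTransGen (fun x y => x ∈ (Nout E A)ᶜ ∧ y ∈ (Nout E A)ᶜ ∧ E x y) a x → x ∈ A :=
    fun x hx => by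
    induction hx with
    | refl => exact ha
    | tail _ step ih => exact by_contra fun hy => step.2.1 ⟨hy, _, ih, step.2.2⟩
  exact hb (.inl (hstay b (h a (fun h => h.1 ha) b (fun h => hb (.inr h)))))

theorem IsPart.kappa_le [Finite V] {A : Set V} (hA : IsPart E A) :
    kappa E ≤ (Nout E A).ncard :=
  kappa_le_ncard_of_not_scOn hA.not_scOn_compl_Nout

theorem kappa_le_card_sub_one [Finite V] : kappa E ≤ Nat.card V - 1 := by
  rw [kappa]
  split_ifs with h
  · obtain ⟨T, hT⟩ := h
    obtain ⟨a, ha, b, hb, hab⟩ := exists_not_reflTransGen_of_not_scOn hT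
    have hne : a ≠ b := by rintro rfl; exact hab .refl
    have h2 : 2 ≤ Tᶜ.ncard := (Set.ncard_pair hne).symm.le.trans
      (Set.ncard_le_ncard (Set.insert_subset ha (Set.singleton_subset_iff.2 hb)))
    have := Set.ncard_add_ncard_compl T
    have := Nat.sInf_le (s := {m | ∃ T : Set V, T.ncard = m ∧ ¬ SCOn E Tᶜ}) ⟨T, rfl, hT⟩
    omega
  · exact le_rfl

theorem kappa_eq_card_sub_one [Finite V] (h : ¬ ∃ T : Set V, ¬ SCOn E Tᶜ) :
    kappa E = Nat.card V - 1 :=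
  if_neg h

theorem exists_isAtomD [Finite V] (h : ∃ T : Set V, ¬ SCOn E Tᶜ) : ∃ A, IsAtomD E A := by
  obtain ⟨T, hTκ, hT⟩ : kappa E ∈ {m | ∃ T : Set V, T.ncard = m ∧ ¬ SCOn E Tᶜ} := by
    rw [kappa, if_pos h]
    obtain ⟨T, hT⟩ := h
    exact Nat.sInf_mem ⟨T.ncard, T, rfl, hT⟩
  obtain ⟨A, hA, hAT⟩ := exists_isPart_Nout_subset_of_not_scOn hT
  have hAκ : (Nout E A).ncard = kappa E :=
    le_antisymm (hTκ ▸ Set.ncard_le_ncard hAT) hA.kappa_le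
  let sizes := {n | ∃ B : Set V, (IsPart E B ∧ (Nout E B).ncard = kappa E) ∧ B.ncard = n}
  obtain ⟨B, hB, hBn⟩ := Nat.sInf_mem (⟨A.ncard, A, ⟨hA, hAκ⟩, rfl⟩ : sizes.Nonempty)
  exact ⟨B, hB.1, hB.2, fun C hC hCκ => hBn ▸ Nat.sInf_le ⟨C, ⟨hC, hCκ⟩, rfl⟩⟩

theorem disjoint_Nout (A : Set V) : Disjoint A (Nout E A) :=
  Set.disjoint_left.2 fun _ ha hn => hn.1 ha

theorem ncard_union_Nout [Finite V] (A : Set V) :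
    (A ∪ Nout E A).ncard = A.ncard + (Nout E A).ncard :=
  Set.ncard_union_eq (disjoint_Nout A)

theorem union_union_Nout_union (A B : Set V) :
    A ∪ B ∪ Nout E (A ∪ B) = (A ∪ Nout E A) ∪ (B ∪ Nout E B) := by
  ext x
  simp only [Nout, Set.mem_union]
  grind

theorem inter_union_Nout_inter_subset (A B : Set V) :
    A ∩ B ∪ Nout E (A ∩ B) ⊆ (A ∪ Nout E A) ∩ (B ∪ Nout E B) := by
  intro x
  simp only [Nout, Set.mem_union, Set.mem_inter_iff]
  grind

theorem ncard_Nout_inter_add_ncard_Nout_union_le [Finite V] (A B : Set V) :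
    (Nout E (A ∩ B)).ncard + (Nout E (A ∪ B)).ncard ≤
      (Nout E A).ncard + (Nout E B).ncard := by
  have hinter := Set.ncard_le_ncard (inter_union_Nout_inter_subset (E := E) A B)
  have hunion := congrArg Set.ncard (union_union_Nout_union (E := E) A B)
  have hβ := Set.ncard_inter_add_ncard_union (A ∪ Nout E A) (B ∪ Nout E B)
  have := Set.ncard_inter_add_ncard_union A B
  simp only [ncard_union_Nout] at hinter hunion hβ
  omega

theorem IsAtomD.subset_of_ncard_le_ncard_compl [Finite V] {A F : Set V} (hA : IsAtomD E A)
    (hFκ : (Nout E F).ncard = kappa E) (hAF : (A ∩ F).Nonempty)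
    (hsize : A.ncard ≤ (F ∪ Nout E F)ᶜ.ncard) : A ⊆ F := by
  have hAFpart : IsPart E (A ∩ F) := ⟨hAF, hA.1.2.mono
    (Set.compl_subset_compl.2 fun x hx => (inter_union_Nout_inter_subset A F hx).1)⟩
  have hκ := hAFpart.kappa_le
  have hAκ := hA.2.1
  by_cases hU : (A ∪ F ∪ Nout E (A ∪ F))ᶜ.Nonempty
  · -- `A ∪ F` is a part, so submodularity gives `|N(A ∩ F)| = κ` and minimality of `A` applies
    have := IsPart.kappa_le ⟨hAF.mono (fun x hx => .inl hx.1), hU⟩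
    have := ncard_Nout_inter_add_ncard_Nout_union_le (E := E) A F
    have hle := hA.2.2 _ hAFpart (by omega)
    rw [← Set.eq_of_subset_of_ncard_le Set.inter_subset_left hle]
    exact Set.inter_subset_right
  · -- otherwise `A ∪ N(A)` covers the exterior of `F`, leaving too little room for `N(A ∩ F)`
    rw [Set.not_nonempty_iff_eq_empty, Set.compl_empty_iff, union_union_Nout_union] at hU
    have hcover := Set.ncard_inter_add_ncard_union (A ∪ Nout E A) (F ∪ Nout E F)
    rw [hU, Set.ncard_univ, ← Set.ncard_add_ncard_compl (F ∪ Nout E F)] at hcover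
    have hinter := Set.ncard_le_ncard (inter_union_Nout_inter_subset (E := E) A F)
    have := (Set.ncard_pos).2 hAF
    simp only [ncard_union_Nout] at hinter hcover
    omega

theorem Nout_flip_compl_union_Nout_subset (F : Set V) :
    Nout (flip E) (F ∪ Nout E F)ᶜ ⊆ Nout E F := by
  rintro x ⟨hx, y, hy, hxy⟩
  rcases not_not.1 hx with hxF | hxN
  · exact absurd (.inr ⟨fun hyF => hy (.inl hyF), x, hxF, hxy⟩) hy
  · exact hxN

theorem IsPart.flip_compl_union_Nout {F : Set V} (hF : IsPart E F) :
    IsPart (flip E) (F ∪ Nout E F)ᶜ := by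
  obtain ⟨f, hf⟩ := hF.1
  refine ⟨hF.2, f, ?_⟩
  rintro (h | h)
  · exact h (.inl hf)
  · exact (Nout_flip_compl_union_Nout_subset F h).1 hf

/-- Hamidoune's intersection property of atoms. -/
theorem IsAtomD.subset_of_inter_nonempty [Finite V] {A B F : Set V} (hA : IsAtomD E A)
    (hB : IsAtomD (flip E) B) (hAB : A.ncard ≤ B.ncard) (hF : IsPart E F)
    (hFκ : (Nout E F).ncard = kappa E) (hAF : (A ∩ F).Nonempty) : A ⊆ F := by
  have hF' := hF.flip_compl_union_Nout
  have hκ : (Nout (flip E) (F ∪ Nout E F)ᶜ).ncard = kappa (flip E) :=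
    le_antisymm (kappa_flip (E := E) ▸ hFκ ▸ Set.ncard_le_ncard
      (Nout_flip_compl_union_Nout_subset F)) hF'.kappa_le
  exact hA.subset_of_ncard_le_ncard_compl hFκ hAF (hAB.trans (hB.2.2 _ hF' hκ))

variable {V' : Type*} {E' : V' → V' → Prop} {ψ : V' → V}

theorem kappa_le_ncard_Nout_inter_range [Finite V] [Finite V'] (hψ : Function.Injective ψ)
    (hE : ∀ x y, E' x y → E (ψ x) (ψ y)) {A : Set V} (hA : (A ∩ Set.range ψ).Nonempty)
    (hψA : ¬ Set.range ψ ⊆ A ∪ Nout E A) :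
    kappa E' ≤ (Nout E A ∩ Set.range ψ).ncard := by
  obtain ⟨_, ha, a, rfl⟩ := hA
  obtain ⟨_, ⟨b, rfl⟩, hb⟩ := Set.not_subset.1 hψA
  have hpart : IsPart E' (ψ ⁻¹' A) := by
    refine ⟨⟨a, ha⟩, b, ?_⟩
    rintro (hbA | ⟨_, c, hc, hcb⟩)
    · exact hb (.inl hbA)
    · exact hb (.inr ⟨fun h => hb (.inl h), ψ c, hc, hE c b hcb⟩)
  refine hpart.kappa_le.trans ?_
  rw [← Set.ncard_image_of_injective _ hψ]
  refine Set.ncard_le_ncard ?_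
  rintro _ ⟨x, ⟨hx, y, hy, hyx⟩, rfl⟩
  exact ⟨⟨hx, ψ y, hy, hE y x hyx⟩, x, rfl⟩

theorem Nout_inter_range_nonempty (hE : ∀ x y, E' x y → E (ψ x) (ψ y)) (hSC : SC E')
    {A : Set V} (hA : (A ∩ Set.range ψ).Nonempty) (hψA : ¬ Set.range ψ ⊆ A) :
    (Nout E A ∩ Set.range ψ).Nonempty := by
  obtain ⟨_, ha, a, rfl⟩ := hA
  obtain ⟨_, ⟨b, rfl⟩, hb⟩ := Set.not_subset.1 hψA
  induction hSC a b with
  | refl => exact absurd ha hb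
  | @tail c d _ hcd ih =>
    by_cases hc : ψ c ∈ A
    · exact ⟨ψ d, ⟨hb, ψ c, hc, hE c d hcd⟩, d, rfl⟩
    · exact ih hc

end Digraph

section Invariant

variable {Γ V : Type*} [Group Γ] [MulAction Γ V] {E : V → V → Prop}

theorem Nout_smul (hE : ∀ (g : Γ) x y, E (g • x) (g • y) ↔ E x y) (g : Γ) (A : Set V) :
    Nout E (g • A) = g • Nout E A := by
  ext x
  rw [Set.mem_smul_set_iff_inv_smul_mem]
  constructor
  · rintro ⟨hx, y, hy, hyx⟩
    refine ⟨(Set.mem_smul_set_iff_inv_smul_mem).not.1 hx, g⁻¹ • y,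
      Set.mem_smul_set_iff_inv_smul_mem.1 hy, ?_⟩
    simpa using (hE g⁻¹ y x).2 hyx
  · rintro ⟨hx, y, hy, hyx⟩
    refine ⟨(Set.mem_smul_set_iff_inv_smul_mem).not.2 hx, g • y, Set.smul_mem_smul_set hy, ?_⟩
    simpa using (hE g y (g⁻¹ • x)).2 hyx

theorem IsPart.smul (hE : ∀ (g : Γ) x y, E (g • x) (g • y) ↔ E x y) {A : Set V}
    (hA : IsPart E A) (g : Γ) : IsPart E (g • A) := by
  refine ⟨hA.1.smul_set, ?_⟩
  rw [Nout_smul hE, ← Set.smul_set_union, ← Set.smul_set_compl]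
  exact hA.2.smul_set

theorem IsAtomD.smul [Finite V] (hE : ∀ (g : Γ) x y, E (g • x) (g • y) ↔ E x y) {A : Set V}
    (hA : IsAtomD E A) (g : Γ) : IsAtomD E (g • A) := by
  refine ⟨hA.1.smul hE g, by rw [Nout_smul hE, Set.ncard_smul_set, hA.2.1], fun B hB hBκ => ?_⟩
  have := hA.2.2 (g⁻¹ • B) (hB.smul hE g⁻¹) (by rw [Nout_smul hE, Set.ncard_smul_set, hBκ])
  rwa [Set.ncard_smul_set] at this ⊢

theorem IsAtomD.smul_eq_of_inter_nonempty [Finite V]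
    (hE : ∀ (g : Γ) x y, E (g • x) (g • y) ↔ E x y) {A B : Set V} (hA : IsAtomD E A)
    (hB : IsAtomD (flip E) B) (hAB : A.ncard ≤ B.ncard) {g : Γ} (h : (g • A ∩ A).Nonempty) :
    g • A = A := by
  have hgA := hA.smul hE g
  refine (hgA.subset_of_inter_nonempty hB (by rwa [Set.ncard_smul_set]) hA.1 hA.2.1 h).antisymm
    (hA.subset_of_inter_nonempty hB hAB hgA.1 hgA.2.1 ?_)
  rwa [Set.inter_comm]

end Invariant

theorem Set.ncard_le_ncard_of_ncard_inter_fiber_le {α β : Type*} [Finite α] [Finite β]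
    (f : α → β) {s t : Set α}
    (h : ∀ b, (s ∩ f ⁻¹' {b}).ncard ≤ (t ∩ f ⁻¹' {b}).ncard) :
    s.ncard ≤ t.ncard := by
  have hfib : ∀ u : Set α, u.ncard = ∑ᶠ b, (u ∩ f ⁻¹' {b}).ncard := fun u => by
    rw [← Set.ncard_iUnion_of_finite (fun _ => Set.toFinite _), ← Set.inter_iUnion,
      ← Set.preimage_iUnion, Set.iUnion_of_singleton, Set.preimage_univ, Set.inter_univ]
    exact fun b c hbc => (Set.disjoint_singleton.2 hbc).preimage f |>.mono
      Set.inter_subset_right Set.inter_subset_right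
  rw [hfib s, hfib t]
  exact finsum_le_finsum' (Set.toFinite _) (Set.toFinite _) h

section DoubleCosets

variable {G : Type*} [Group G]

theorem dcoset_eq_doubleCoset (K : Subgroup G) (s : G) :
    dcoset K s = DoubleCoset.doubleCoset s K K := by
  ext g
  rw [DoubleCoset.mem_doubleCoset]
  rfl

theorem mem_dcoset_self (K : Subgroup G) (s : G) : s ∈ dcoset K s :=
  dcoset_eq_doubleCoset K s ▸ DoubleCoset.mem_doubleCoset_self K K s

theorem mul_mem_dcoset {K : Subgroup G} {s x a b : G} (ha : a ∈ K) (hx : x ∈ dcoset K s)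
    (hb : b ∈ K) : a * x * b ∈ dcoset K s := by
  obtain ⟨h₁, hh₁, h₂, hh₂, rfl⟩ := hx
  exact ⟨a * h₁, mul_mem ha hh₁, h₂ * b, mul_mem hh₂ hb, by group⟩

theorem dcoset_mono {K L : Subgroup G} (hKL : K ≤ L) (s : G) : dcoset K s ⊆ dcoset L s :=
  fun _ ⟨h₁, hh₁, h₂, hh₂, he⟩ => ⟨h₁, hKL hh₁, h₂, hKL hh₂, he⟩

theorem dcoset_eq_of_mem {K : Subgroup G} {s t : G} (h : t ∈ dcoset K s) :
    dcoset K t = dcoset K s := by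
  simp only [dcoset_eq_doubleCoset] at h ⊢
  exact DoubleCoset.doubleCoset_eq_of_mem h

theorem mem_iff_of_mem_dcoset {K L : Subgroup G} (hKL : K ≤ L) {s x : G} (hx : x ∈ dcoset K s) :
    x ∈ L ↔ s ∈ L := by
  obtain ⟨h₁, hh₁, h₂, hh₂, rfl⟩ := hx
  rw [mul_mem_cancel_right (hKL hh₂), mul_mem_cancel_left (hKL hh₁)]

theorem dcoset_inv (K : Subgroup G) (s : G) : dcoset K s⁻¹ = (dcoset K s)⁻¹ := by
  ext g
  constructor
  · rintro ⟨h₁, hh₁, h₂, hh₂, rfl⟩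
    exact ⟨h₂⁻¹, inv_mem hh₂, h₁⁻¹, inv_mem hh₁, by group⟩
  · rintro ⟨h₁, hh₁, h₂, hh₂, hg⟩
    exact ⟨h₂⁻¹, inv_mem hh₂, h₁⁻¹, inv_mem hh₁, by rw [← inv_inv g, hg]; group⟩

theorem closure_union_inv (K : Subgroup G) (T : Set G) :
    Subgroup.closure ((K : Set G) ∪ T⁻¹) = Subgroup.closure ((K : Set G) ∪ T) := by
  rw [← Subgroup.closure_inv, Set.union_inv, inv_inv, inv_coe_set]

variable {H : Subgroup G}

theorem preimage_image_mk_dcoset (s : G) :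
    QuotientGroup.mk ⁻¹' (QuotientGroup.mk '' dcoset H s : Set (G ⧸ H)) = dcoset H s := by
  refine (Set.subset_preimage_image _ _).antisymm' ?_
  rintro x ⟨y, hy, hyx⟩
  simpa using mul_mem_dcoset (one_mem H) hy (QuotientGroup.eq.1 hyx)

theorem disjoint_image_mk_dcoset {s t : G} (h : dcoset H s ≠ dcoset H t) :
    Disjoint (QuotientGroup.mk '' dcoset H s : Set (G ⧸ H)) (QuotientGroup.mk '' dcoset H t) := by
  refine Set.disjoint_left.2 fun x hs ht => h ?_
  obtain ⟨g, hg, rfl⟩ := hs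
  have hg' : g ∈ dcoset H t := preimage_image_mk_dcoset t ▸ ht
  rw [← dcoset_eq_of_mem hg, dcoset_eq_of_mem hg']

end DoubleCosets

section CosetDigraph

variable {G : Type*} [Group G] {H : Subgroup G} {S : Set G}

theorem cayleyRel_mk_iff {a b : G} :
    cayleyRel H S a b ↔ ∃ s ∈ S, a⁻¹ * b ∈ dcoset H s := by
  refine ⟨fun ⟨s, hs, g₁, g₂, h₁, h₂, hg⟩ => ⟨s, hs, ?_⟩,
    fun ⟨s, hs, h⟩ => ⟨s, hs, a, b, rfl, rfl, h⟩⟩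
  have := mul_mem_dcoset (inv_mem (QuotientGroup.eq.1 h₁)) hg (QuotientGroup.eq.1 h₂)
  simpa [mul_assoc] using this

theorem cayleyRel_smul (g : G) (x y : G ⧸ H) :
    cayleyRel H S (g • x) (g • y) ↔ cayleyRel H S x y := by
  induction x using QuotientGroup.induction_on
  induction y using QuotientGroup.induction_on
  simp only [MulAction.Quotient.smul_coe, smul_eq_mul, cayleyRel_mk_iff, mul_inv_rev, mul_assoc,
    inv_mul_cancel_left]

theorem reflTransGen_cayleyRel_smul {x y : G ⧸ H} (g : G)
    (h : ReflTransGen (cayleyRel H S) x y) : ReflTransGen (cayleyRel H S) (g • x) (g • y) :=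
  ReflTransGen.lift (g • ·) (fun _ _ hxy => (cayleyRel_smul g _ _).2 hxy) _ _ h

theorem closure_eq_top_of_sc (h : SC (cayleyRel H S)) :
    Subgroup.closure ((H : Set G) ∪ S) = ⊤ := by
  set C := Subgroup.closure ((H : Set G) ∪ S)
  have hHC : H ≤ C := fun x hx => Subgroup.subset_closure (.inl hx)
  have hreach : ∀ x, ReflTransGen (cayleyRel H S) ((1 : G) : G ⧸ H) x →
      ∃ c ∈ C, (c : G ⧸ H) = x := fun x hx => by
    induction hx with
    | refl => exact ⟨1, one_mem C, rfl⟩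
    | @tail y z _ hyz ih =>
      obtain ⟨c, hc, rfl⟩ := ih
      induction z using QuotientGroup.induction_on with | H b => ?_
      obtain ⟨s, hs, hcb⟩ := cayleyRel_mk_iff.1 hyz
      obtain ⟨h₁, hh₁, h₂, hh₂, he⟩ := hcb
      refine ⟨b, ?_, rfl⟩
      rw [← mul_inv_cancel_left c b, he]
      exact mul_mem hc
        (mul_mem (mul_mem (hHC hh₁) (Subgroup.subset_closure (.inr hs))) (hHC hh₂))
  refine eq_top_iff.2 fun g _ => ?_
  obtain ⟨c, hc, hcg⟩ := hreach _ (h _ (g : G ⧸ H))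
  rw [← mul_inv_cancel_left c g]
  exact mul_mem hc (hHC (QuotientGroup.eq.1 hcg))

theorem sc_of_closure_eq_top [Finite G] (h : Subgroup.closure ((H : Set G) ∪ S) = ⊤) :
    SC (cayleyRel H S) := by
  have hreach : ∀ g : G, ReflTransGen (cayleyRel H S) ((1 : G) : G ⧸ H) g := fun g => by
    have hg : g ∈ Submonoid.closure ((H : Set G) ∪ S) := by
      rw [← Subgroup.closure_toSubmonoid_of_finite, h]
      trivial
    induction hg using Submonoid.closure_induction with
    | mem x hx =>
      rcases hx with hx | hx
      · rw [QuotientGroup.eq.2 (by simpa using hx)]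
      · exact .single (cayleyRel_mk_iff.2 ⟨x, hx, by simpa using mem_dcoset_self H x⟩)
    | one => exact .refl
    | mul a b _ _ ha hb =>
      refine ha.trans ?_
      simpa using reflTransGen_cayleyRel_smul a hb
  intro x y
  induction x using QuotientGroup.induction_on with | H a => ?_
  induction y using QuotientGroup.induction_on with | H b => ?_
  simpa using reflTransGen_cayleyRel_smul a (hreach (a⁻¹ * b))

theorem cayleyRel_inv (S : Set G) : cayleyRel H S⁻¹ = flip (cayleyRel H S) := by
  funext x y
  induction x using QuotientGroup.induction_on with | H a => ?_
  induction y using QuotientGroup.induction_on with | H b => ?_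
  simp only [flip, cayleyRel_mk_iff, eq_iff_iff]
  refine ⟨fun ⟨s, hs, h⟩ => ⟨s⁻¹, hs, ?_⟩,
    fun ⟨s, hs, h⟩ => ⟨s⁻¹, by simpa using hs, ?_⟩⟩
  · simpa [dcoset_inv] using h
  · simpa [dcoset_inv] using h

theorem cayleyRel_mono {S T : Set G} (hST : S ⊆ T) {x y : G ⧸ H} (h : cayleyRel H S x y) :
    cayleyRel H T x y :=
  let ⟨s, hs, rest⟩ := h
  ⟨s, hST hs, rest⟩

theorem kappa_cayleyRel_inv [Finite G] (T : Set G) :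
    kappa (cayleyRel H T⁻¹) = kappa (cayleyRel H T) := by
  rw [cayleyRel_inv, kappa_flip]

end CosetDigraph

section CosetsOfSubgroups

variable {G : Type*} [Group G] {H K L : Subgroup G}

def subgroupOfQuotientInclusion (H K : Subgroup G) : K ⧸ H.subgroupOf K → G ⧸ H :=
  Quotient.map' Subtype.val fun a b h => by
    simpa [QuotientGroup.leftRel_apply, Subgroup.mem_subgroupOf] using h

@[simp]
theorem subgroupOfQuotientInclusion_mk (g : K) :
    subgroupOfQuotientInclusion H K g = ((g : G) : G ⧸ H) :=
  rfl

theorem subgroupOfQuotientInclusion_injective (K : Subgroup G) :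
    Function.Injective (subgroupOfQuotientInclusion H K) := by
  intro x y hxy
  induction x using QuotientGroup.induction_on
  induction y using QuotientGroup.induction_on
  simpa [QuotientGroup.eq, Subgroup.mem_subgroupOf] using hxy

theorem range_subgroupOfQuotientInclusion (K : Subgroup G) :
    Set.range (subgroupOfQuotientInclusion H K) = QuotientGroup.mk '' (K : Set G) := by
  ext x
  constructor
  · rintro ⟨y, rfl⟩
    induction y using QuotientGroup.induction_on with | H g => exact ⟨g, g.2, rfl⟩
  · rintro ⟨g, hg, rfl⟩
    exact ⟨(⟨g, hg⟩ : K), rfl⟩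

theorem one_mem_image_mk_inter_range (K L : Subgroup G) :
    ((1 : G) : G ⧸ H) ∈ QuotientGroup.mk '' (K : Set G) ∩
      Set.range (subgroupOfQuotientInclusion H L) :=
  ⟨⟨1, one_mem K, rfl⟩, QuotientGroup.mk (1 : L), rfl⟩

theorem mk_mem_image_mk_iff (hHL : H ≤ L) {g : G} :
    (g : G ⧸ H) ∈ (QuotientGroup.mk '' (L : Set G) : Set (G ⧸ H)) ↔ g ∈ L := by
  refine ⟨fun ⟨a, ha, hag⟩ => ?_, fun hg => ⟨g, hg, rfl⟩⟩
  rw [← mul_inv_cancel_left a g]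
  exact mul_mem ha (hHL (QuotientGroup.eq.1 hag))

theorem smul_mem_image_mk_iff (hHL : H ≤ L) {l : G} (hl : l ∈ L) {x : G ⧸ H} :
    l • x ∈ (QuotientGroup.mk '' (L : Set G) : Set (G ⧸ H)) ↔
      x ∈ (QuotientGroup.mk '' (L : Set G) : Set (G ⧸ H)) := by
  induction x using QuotientGroup.induction_on
  rw [MulAction.Quotient.smul_coe, smul_eq_mul, mk_mem_image_mk_iff hHL,
    mk_mem_image_mk_iff hHL, mul_mem_cancel_left hl]

theorem image_mk_inf (hHK : H ≤ K) (hHL : H ≤ L) :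
    (QuotientGroup.mk '' ((K ⊓ L : Subgroup G) : Set G) : Set (G ⧸ H)) =
      QuotientGroup.mk '' (K : Set G) ∩ QuotientGroup.mk '' (L : Set G) := by
  ext x
  induction x using QuotientGroup.induction_on
  simp only [Set.mem_inter_iff, mk_mem_image_mk_iff hHK, mk_mem_image_mk_iff hHL,
    mk_mem_image_mk_iff (le_inf hHK hHL), Subgroup.mem_inf]

theorem exists_mem_notMem_of_closure_eq_top {S : Set G}
    (hgen : Subgroup.closure ((H : Set G) ∪ S) = ⊤) (hHL : H ≤ L) (hL : L ≠ ⊤) :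
    ∃ r ∈ S, r ∉ L := by
  by_contra! h
  exact hL (eq_top_iff.2 (hgen ▸ (Subgroup.closure_le L).2 (Set.union_subset hHL h)))

theorem cayleyRel_subgroupOfQuotientInclusion {K : Subgroup G} {T : Set G}
    {x y : K ⧸ H.subgroupOf K} (h : cayleyRel (H.subgroupOf K) (Subtype.val ⁻¹' T) x y) :
    cayleyRel H T (subgroupOfQuotientInclusion H K x) (subgroupOfQuotientInclusion H K y) := by
  induction x using QuotientGroup.induction_on
  induction y using QuotientGroup.induction_on
  obtain ⟨s, hs, h₁, hh₁, h₂, hh₂, he⟩ := cayleyRel_mk_iff.1 h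
  exact cayleyRel_mk_iff.2 ⟨s, hs, h₁, hh₁, h₂, hh₂, congrArg Subtype.val he⟩

theorem ncard_image_mk_subgroup (K : Subgroup G) :
    (QuotientGroup.mk '' (K : Set G) : Set (G ⧸ H)).ncard = H.relIndex K := by
  rw [← range_subgroupOfQuotientInclusion, Set.ncard_range_of_injective
    (subgroupOfQuotientInclusion_injective K)]
  rfl

theorem ncard_preimage_mk (X : Set (G ⧸ H)) :
    (QuotientGroup.mk ⁻¹' X).ncard = Nat.card H * X.ncard := by
  rw [← Nat.card_coe_set_eq, QuotientGroup.card_preimage_mk, Nat.card_coe_set_eq]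

theorem ncard_dcoset (s : G) : (dcoset H s).ncard = Nat.card H * dval H s := by
  rw [dval, ← ncard_preimage_mk, preimage_image_mk_dcoset]

variable [Finite G]

theorem relIndex_le_ncard_of_smul_mem {L : Subgroup G} (hHL : H ≤ L) {X : Set (G ⧸ H)}
    (hX : X.Nonempty) (hLX : ∀ l ∈ L, ∀ x ∈ X, l • x ∈ X) :
    H.relIndex L ≤ X.ncard := by
  obtain ⟨x, hx⟩ := hX
  induction x using QuotientGroup.induction_on with | H g => ?_
  have hsub : (· * g) '' (L : Set G) ⊆ QuotientGroup.mk ⁻¹' X := by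
    rintro _ ⟨l, hl, rfl⟩
    exact hLX l hl _ hx
  have hcard := Set.ncard_le_ncard hsub
  have hL : Nat.card L = Nat.card H * H.relIndex L := by
    rw [← Subgroup.relIndex_bot_left, ← Subgroup.relIndex_bot_left,
      Subgroup.relIndex_mul_relIndex ⊥ H L bot_le hHL]
  rw [Set.ncard_image_of_injective _ (mul_left_injective g), ncard_preimage_mk,
    ← Nat.card_coe_set_eq, SetLike.coe_sort_coe, hL] at hcard
  exact Nat.le_of_mul_le_mul_left hcard Nat.card_pos

theorem dval_inv (s : G) : dval H s⁻¹ = dval H s :=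
  Nat.eq_of_mul_eq_mul_left Nat.card_pos <| by
    rw [← ncard_dcoset, ← ncard_dcoset, dcoset_inv, Set.ncard_inv]

theorem sum_dval_le_ncard {T : Finset G}
    (hT : ∀ s ∈ T, ∀ t ∈ T, s ≠ t → dcoset H s ≠ dcoset H t) {Y : Set (G ⧸ H)}
    (hY : ∀ t ∈ T, QuotientGroup.mk '' dcoset H t ⊆ Y) :
    ∑ t ∈ T, dval H t ≤ Y.ncard := by
  have hdisj : (T : Set G).PairwiseDisjoint
      fun t => (QuotientGroup.mk '' dcoset H t : Set (G ⧸ H)) :=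
    fun s hs t ht hst => disjoint_image_mk_dcoset (hT s hs t ht hst)
  simp only [dval]
  rw [← finsum_mem_coe_finset, ← T.finite_toSet.ncard_biUnion (fun _ _ => Set.toFinite _) hdisj]
  exact Set.ncard_le_ncard (Set.iUnion₂_subset hY)

end CosetsOfSubgroups

theorem exists_subgroup_isAtomD {G : Type*} [Group G] [Finite G] {H : Subgroup G} {S : Set G}
    {A₀ B₀ : Set (G ⧸ H)} (hA₀ : IsAtomD (cayleyRel H S) A₀)
    (hB₀ : IsAtomD (flip (cayleyRel H S)) B₀) (hAB : A₀.ncard ≤ B₀.ncard) :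
    ∃ K : Subgroup G, H ≤ K ∧ IsAtomD (cayleyRel H S) (QuotientGroup.mk '' (K : Set G)) := by
  obtain ⟨x, hx⟩ := hA₀.1.1
  induction x using QuotientGroup.induction_on with | H g => ?_
  set A := g⁻¹ • A₀
  have hA : IsAtomD (cayleyRel H S) A := hA₀.smul cayleyRel_smul g⁻¹
  have h1 : ((1 : G) : G ⧸ H) ∈ A := ⟨g, hx, by simp⟩
  -- an atom through `1H` is the image of its stabilizer
  have hmem : ∀ a : G, a ∈ MulAction.stabilizer G A ↔ (a : G ⧸ H) ∈ A := fun a => by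
    refine ⟨fun ha => ?_, fun ha => hA.smul_eq_of_inter_nonempty cayleyRel_smul hB₀
      (by rwa [Set.ncard_smul_set])
      ⟨(a : G ⧸ H), ⟨((1 : G) : G ⧸ H), h1, by simp⟩, ha⟩⟩
    rw [← MulAction.mem_stabilizer_iff.1 ha]
    simpa using Set.smul_mem_smul_set (a := a) h1
  have hHK : H ≤ MulAction.stabilizer G A := fun h hh => by
    rwa [hmem, QuotientGroup.eq.2 (by simpa using inv_mem hh : h⁻¹ * 1 ∈ H)]
  refine ⟨MulAction.stabilizer G A, hHK, ?_⟩
  convert hA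
  ext x
  induction x using QuotientGroup.induction_on with | H a => ?_
  rw [← hmem]
  refine ⟨fun ⟨b, hb, hba⟩ => ?_, fun ha => ⟨a, ha, rfl⟩⟩
  rw [← mul_inv_cancel_left b a]
  exact mul_mem hb (hHK (QuotientGroup.eq.1 hba))

section SubgroupBoundary

variable {G : Type*} [Group G] {H K G' : Subgroup G} {S : Set G}

local notation "𝒜" => (QuotientGroup.mk '' (K : Set G) : Set (G ⧸ H))
local notation "ℬ" => (QuotientGroup.mk '' (G' : Set G) : Set (G ⧸ H))
local notation "𝒩" => Nout (cayleyRel H S) 𝒜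

theorem smul_mem_Nout_image_mk_iff (hHK : H ≤ K) {k : G} (hk : k ∈ K) {x : G ⧸ H} :
    k • x ∈ 𝒩 ↔ x ∈ 𝒩 := by
  have hA : k • 𝒜 = 𝒜 := by
    ext y
    rw [Set.mem_smul_set_iff_inv_smul_mem, smul_mem_image_mk_iff hHK (inv_mem hk)]
  conv_rhs => rw [← Set.smul_mem_smul_set_iff (a := k), ← Nout_smul cayleyRel_smul, hA]

theorem image_mk_dcoset_subset_Nout (hHK : H ≤ K) {t : G} (ht : t ∈ S) (htK : t ∉ K) :
    QuotientGroup.mk '' dcoset H t ⊆ 𝒩 := by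
  rintro _ ⟨x, hx, rfl⟩
  refine ⟨fun hxK => htK ?_, ((1 : G) : G ⧸ H), ⟨1, one_mem K, rfl⟩,
    cayleyRel_mk_iff.2 ⟨t, ht, by simpa using hx⟩⟩
  rwa [mk_mem_image_mk_iff hHK, mem_iff_of_mem_dcoset hHK hx] at hxK

theorem ne_top_of_isPart_image_mk (hK : IsPart (cayleyRel H S) 𝒜) : K ≠ ⊤ := by
  rintro rfl
  obtain ⟨x, hx⟩ := hK.2
  induction x using QuotientGroup.induction_on with | H g => exact hx (.inl ⟨g, trivial, rfl⟩)

variable [Finite G]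

theorem relIndex_le_ncard_Nout_image_mk (hgen : Subgroup.closure ((H : Set G) ∪ S) = ⊤)
    (hHK : H ≤ K) (hK : IsPart (cayleyRel H S) 𝒜) :
    H.relIndex K ≤ (𝒩).ncard := by
  obtain ⟨r, hrS, hrK⟩ :=
    exists_mem_notMem_of_closure_eq_top hgen hHK (ne_top_of_isPart_image_mk hK)
  exact relIndex_le_ncard_of_smul_mem hHK
    ⟨r, image_mk_dcoset_subset_Nout hHK hrS hrK ⟨r, mem_dcoset_self H r, rfl⟩⟩
    fun k hk x hx => (smul_mem_Nout_image_mk_iff hHK hk).2 hx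

theorem relIndex_le_ncard_Nout_of_subset (hgen : Subgroup.closure ((H : Set G) ∪ S) = ⊤)
    (hHK : H ≤ K) (hHG' : H ≤ G') (hK : IsPart (cayleyRel H S) 𝒜) (hsat : ℬ ⊆ 𝒜 ∪ 𝒩) :
    H.relIndex G' ≤ (𝒩).ncard := by
  have hnz : ∀ L M : Subgroup G, L.relIndex M ≠ 0 := fun L M =>
    (L.subgroupOf M).index_ne_zero_of_finite
  have hsplit := Set.ncard_inter_add_ncard_sdiff_eq_ncard 𝒩 ℬ
  have hBA : (ℬ \ 𝒜).ncard + H.relIndex (K ⊓ G') = H.relIndex G' := by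
    rw [← ncard_image_mk_subgroup, ← ncard_image_mk_subgroup, image_mk_inf hHK hHG',
      Set.inter_comm, add_comm, Set.ncard_inter_add_ncard_sdiff_eq_ncard]
  have hNB : (ℬ \ 𝒜).ncard ≤ (𝒩 ∩ ℬ).ncard :=
    Set.ncard_le_ncard fun x hx => ⟨(hsat hx.1).resolve_left hx.2, hx.1⟩
  by_cases hG'K : G' ≤ K
  · exact (Subgroup.relIndex_le_of_le_right hG'K (hnz _ _)).trans
      (relIndex_le_ncard_Nout_image_mk hgen hHK hK)
  by_cases hKG' : K ≤ G'
  · -- a generator outside `G'` shows that the `K`-invariant set `𝒩 \ ℬ` is nonempty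
    have hG' : G' ≠ ⊤ := by
      rintro rfl
      obtain ⟨x, hx⟩ := hK.2
      induction x using QuotientGroup.induction_on with
      | H g => exact hx (hsat ⟨g, trivial, rfl⟩)
    obtain ⟨r, hrS, hrG'⟩ := exists_mem_notMem_of_closure_eq_top hgen hHG' hG'
    have hA : H.relIndex K ≤ (𝒩 \ ℬ).ncard := relIndex_le_ncard_of_smul_mem hHK
      ⟨r, image_mk_dcoset_subset_Nout hHK hrS (fun h => hrG' (hKG' h))
        ⟨r, mem_dcoset_self H r, rfl⟩, (mk_mem_image_mk_iff hHG').not.2 hrG'⟩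
      fun k hk x hx => ⟨(smul_mem_Nout_image_mk_iff hHK hk).2 hx.1,
        (smul_mem_image_mk_iff hHG' (hKG' hk)).not.2 hx.2⟩
    rw [inf_of_le_left hKG'] at hBA
    omega
  · -- translating `ℬ \ 𝒜` by some `k ∈ K \ G'` lands in `𝒩 \ ℬ`, and `2 |𝒜 ∩ ℬ| ≤ |ℬ|`
    obtain ⟨k, hkK, hkG'⟩ := SetLike.not_le_iff_exists.1 hKG'
    have hkBA : (ℬ \ 𝒜).ncard ≤ (𝒩 \ ℬ).ncard := by
      rw [← Set.ncard_smul_set k]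
      refine Set.ncard_le_ncard ?_
      rintro _ ⟨x, hx, rfl⟩
      induction x using QuotientGroup.induction_on with | H g => ?_
      refine ⟨(smul_mem_Nout_image_mk_iff hHK hkK).2 ((hsat hx.1).resolve_left hx.2), ?_⟩
      show k • (g : G ⧸ H) ∉ ℬ
      rw [MulAction.Quotient.smul_coe, smul_eq_mul, mk_mem_image_mk_iff hHG',
        mul_mem_cancel_right ((mk_mem_image_mk_iff hHG').1 hx.1)]
      exact hkG'
    have hindex : 2 ≤ (K ⊓ G').relIndex G' := by
      have h1 : (K ⊓ G').relIndex G' ≠ 1 := fun h =>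
        hG'K ((Subgroup.relIndex_eq_one.1 h).trans inf_le_left)
      have := hnz (K ⊓ G') G'
      omega
    have h2 := Subgroup.relIndex_mul_relIndex H (K ⊓ G') G' (le_inf hHK hHG') inf_le_right
    have h3 := Nat.mul_le_mul_left (H.relIndex (K ⊓ G')) hindex
    omega

theorem ncard_image_mk_le_ncard_Nout_sdiff_inter_blocks (hHK : H ≤ K) (hHG' : H ≤ G')
    {U : Set G} (hUK : U ⊆ K) (hUG' : ∀ u ∈ U, u ∉ G')
    (hp : H.relIndex (K ⊓ G') ≤ (𝒩 ∩ ℬ).ncard) :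
    (QuotientGroup.mk '' U : Set (G ⧸ H)).ncard ≤ ((𝒩 \ ℬ) ∩ Subgroup.quotientMapOfLE hHG' ⁻¹'
      (Subgroup.quotientMapOfLE hHG' '' (QuotientGroup.mk '' U))).ncard := by
  set π := Subgroup.quotientMapOfLE hHG'
  refine Set.ncard_le_ncard_of_ncard_inter_fiber_le π fun b => ?_
  rcases (QuotientGroup.mk '' U ∩ π ⁻¹' {b}).eq_empty_or_nonempty with
    h | ⟨_, ⟨u, hu, rfl⟩, hub⟩
  · simp [h]
  -- the block `b = uG'` meets `𝒜` in `u • (𝒜 ∩ ℬ)` and `𝒩` in `u • (𝒩 ∩ ℬ)`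
  have hπ : ∀ g ∈ G', π (u • (g : G ⧸ H)) = b := fun g hg => by
    rw [← Set.mem_singleton_iff.1 hub]
    exact QuotientGroup.eq.2 (by simpa using hg)
  calc (QuotientGroup.mk '' U ∩ π ⁻¹' {b}).ncard
      ≤ (u • QuotientGroup.mk '' ((K ⊓ G' : Subgroup G) : Set G) : Set (G ⧸ H)).ncard := by
        refine Set.ncard_le_ncard ?_
        rintro _ ⟨⟨y, hy, rfl⟩, hyb⟩
        have huy : u⁻¹ * y ∈ G' := QuotientGroup.eq.1 (hub.trans hyb.symm)
        have hKG' : u⁻¹ * y ∈ K ⊓ G' :=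
          Subgroup.mem_inf.2 ⟨mul_mem (inv_mem (hUK hu)) (hUK hy), huy⟩
        exact ⟨_, ⟨u⁻¹ * y, hKG', rfl⟩, by simp⟩
    _ = H.relIndex (K ⊓ G') := by rw [Set.ncard_smul_set, ncard_image_mk_subgroup]
    _ ≤ (𝒩 ∩ ℬ).ncard := hp
    _ = (u • (𝒩 ∩ ℬ)).ncard := (Set.ncard_smul_set _ _).symm
    _ ≤ _ := by
        refine Set.ncard_le_ncard ?_
        rintro _ ⟨_, ⟨hxN, g, hg, rfl⟩, rfl⟩
        refine ⟨⟨⟨(smul_mem_Nout_image_mk_iff hHK (hUK hu)).2 hxN, ?_⟩,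
          _, ⟨u, hu, rfl⟩, hub.trans (hπ g hg).symm⟩, hπ g hg⟩
        show u • (g : G ⧸ H) ∉ ℬ
        rw [MulAction.Quotient.smul_coe, smul_eq_mul, mk_mem_image_mk_iff hHG',
          mul_mem_cancel_right hg]
        exact hUG' u hu

end SubgroupBoundary

section Splitting

variable {G : Type*} [Group G]

/-- The hypotheses of the theorem, with strong connectivity of `𝒢(G, H, S)` replaced by the
equivalent `⟨H ∪ S⟩ = G`; they are stable under `S ↦ S⁻¹` (`IsAdmissibleSplit.inv`). -/
structure IsAdmissibleSplit (H : Subgroup G) (S R₁ R₂ : Finset G) (G' : Subgroup G) : Prop where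
  dcoset_ne : ∀ s ∈ S, ∀ t ∈ S, s ≠ t → dcoset H s ≠ dcoset H t
  closure_eq_top : Subgroup.closure ((H : Set G) ∪ S) = ⊤
  union_eq : R₁ ∪ R₂ = S
  eq_closure : G' = Subgroup.closure ((H : Set G) ∪ R₁)
  notMem : ∀ r ∈ R₂, r ∉ G'
  closure_eq_of_dcoset_eq : ∀ r ∈ R₂, ∀ t ∈ R₂, dcoset G' r = dcoset G' t →
    Subgroup.closure ((H : Set G) ∪ {r}) = Subgroup.closure ((H : Set G) ∪ {t})

namespace IsAdmissibleSplit

variable {H G' K : Subgroup G} {S R₁ R₂ : Finset G} (hσ : IsAdmissibleSplit H S R₁ R₂ G')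
include hσ

local notation "𝒜" => (QuotientGroup.mk '' (K : Set G) : Set (G ⧸ H))
local notation "ℬ" => (QuotientGroup.mk '' (G' : Set G) : Set (G ⧸ H))
local notation "𝒩" => Nout (cayleyRel H S) 𝒜

theorem le : H ≤ G' :=
  hσ.eq_closure ▸ fun _ hx => Subgroup.subset_closure (.inl hx)

theorem mem_of_mem_right {r : G} (hr : r ∈ R₂) : r ∈ S :=
  hσ.union_eq ▸ Finset.mem_union_right _ hr

theorem coe_left_subset : (R₁ : Set G) ⊆ S :=
  hσ.union_eq ▸ Finset.coe_subset.2 Finset.subset_union_left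

theorem inv : IsAdmissibleSplit H S⁻¹ R₁⁻¹ R₂⁻¹ G' where
  dcoset_ne s hs t ht hst he :=
    hσ.dcoset_ne s⁻¹ (Finset.mem_inv'.1 hs) t⁻¹ (Finset.mem_inv'.1 ht) (inv_injective.ne hst)
      (by rw [dcoset_inv, dcoset_inv, he])
  closure_eq_top := by rw [Finset.coe_inv, closure_union_inv, hσ.closure_eq_top]
  union_eq := by rw [← hσ.union_eq, ← Finset.coe_inj]; push_cast; rw [Set.union_inv]
  eq_closure := by rw [Finset.coe_inv, closure_union_inv, hσ.eq_closure]
  notMem r hr hrG' := hσ.notMem r⁻¹ (Finset.mem_inv'.1 hr) (inv_mem hrG')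
  closure_eq_of_dcoset_eq r hr t ht he := by
    have := hσ.closure_eq_of_dcoset_eq r⁻¹ (Finset.mem_inv'.1 hr) t⁻¹ (Finset.mem_inv'.1 ht)
      (by rw [dcoset_inv, dcoset_inv, he])
    rwa [← Set.inv_singleton, ← Set.inv_singleton, closure_union_inv, closure_union_inv] at this

theorem image_mk_dcoset_subset_Nout_sdiff (hHK : H ≤ K) {t : G} (ht : t ∈ R₂) (htK : t ∉ K) :
    QuotientGroup.mk '' dcoset H t ⊆ (𝒩 \ ℬ) \ Subgroup.quotientMapOfLE hσ.le ⁻¹'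
      (Subgroup.quotientMapOfLE hσ.le ''
        (QuotientGroup.mk '' {u | ∃ s ∈ R₂, s ∈ K ∧ u ∈ dcoset H s})) := by
  rintro _ ⟨x, hx, rfl⟩
  refine ⟨⟨image_mk_dcoset_subset_Nout hHK (hσ.mem_of_mem_right ht) htK ⟨x, hx, rfl⟩, ?_⟩,
    ?_⟩
  · rw [mk_mem_image_mk_iff hσ.le, mem_iff_of_mem_dcoset hσ.le hx]
    exact hσ.notMem t ht
  · -- `HtH` and `HsH` meet a common `G'`-coset, so `G'tG' = G'sG'` and `t ∈ ⟨H ∪ {s}⟩ ≤ K`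
    rintro ⟨_, ⟨u, ⟨s, hs, hsK, hu⟩, rfl⟩, hux⟩
    have hxs : x ∈ dcoset G' s := by
      simpa using mul_mem_dcoset (one_mem G') (dcoset_mono hσ.le s hu) (QuotientGroup.eq.1 hux)
    have hts := hσ.closure_eq_of_dcoset_eq t ht s hs
      ((dcoset_eq_of_mem (dcoset_mono hσ.le t hx)).symm.trans (dcoset_eq_of_mem hxs))
    have ht : t ∈ Subgroup.closure ((H : Set G) ∪ {s}) :=
      hts ▸ Subgroup.subset_closure (Set.mem_union_right _ rfl)
    exact htK ((Subgroup.closure_le K).2 (Set.union_subset hHK (Set.singleton_subset_iff.2 hsK)) ht)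

variable [Finite G]

theorem sc_subgroupOf :
    SC (cayleyRel (H.subgroupOf G') (Subtype.val ⁻¹' (R₁ : Set G))) := by
  obtain rfl := hσ.eq_closure
  apply sc_of_closure_eq_top
  rw [Subgroup.coe_subgroupOf, Subgroup.coe_subtype, ← Set.preimage_union]
  exact Subgroup.closure_closure_coe_preimage

theorem kappa_le_ncard_Nout_inter (hns : ¬ ℬ ⊆ 𝒜 ∪ 𝒩) :
    kappa (cayleyRel (H.subgroupOf G') (Subtype.val ⁻¹' (R₁ : Set G))) ≤ (𝒩 ∩ ℬ).ncard := by
  rw [← range_subgroupOfQuotientInclusion G'] at hns ⊢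
  exact kappa_le_ncard_Nout_inter_range (subgroupOfQuotientInclusion_injective G')
    (fun _ _ h => cayleyRel_mono hσ.coe_left_subset (cayleyRel_subgroupOfQuotientInclusion h))
    ⟨_, one_mem_image_mk_inter_range K G'⟩ hns

theorem relIndex_inf_le_ncard_Nout_inter (hHK : H ≤ K) (hns : ¬ ℬ ⊆ 𝒜 ∪ 𝒩) :
    H.relIndex (K ⊓ G') ≤ (𝒩 ∩ ℬ).ncard := by
  refine relIndex_le_ncard_of_smul_mem (le_inf hHK hσ.le) ?_ fun l hl x hx =>
    ⟨(smul_mem_Nout_image_mk_iff hHK (Subgroup.mem_inf.1 hl).1).2 hx.1,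
      (smul_mem_image_mk_iff hσ.le (Subgroup.mem_inf.1 hl).2).2 hx.2⟩
  rw [← range_subgroupOfQuotientInclusion G'] at hns ⊢
  exact Nout_inter_range_nonempty
    (fun _ _ h => cayleyRel_mono hσ.coe_left_subset (cayleyRel_subgroupOfQuotientInclusion h))
    hσ.sc_subgroupOf ⟨_, one_mem_image_mk_inter_range K G'⟩
    fun h => hns (h.trans Set.subset_union_left)

theorem kappa_add_sum_dval_le_ncard_Nout (hHK : H ≤ K) (hns : ¬ ℬ ⊆ 𝒜 ∪ 𝒩) :
    kappa (cayleyRel (H.subgroupOf G') (Subtype.val ⁻¹' (R₁ : Set G))) + ∑ s ∈ R₂, dval H s ≤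
      (𝒩).ncard := by
  set U := {u | ∃ s ∈ R₂, s ∈ K ∧ u ∈ dcoset H s}
  set W := Subgroup.quotientMapOfLE hσ.le ⁻¹'
    (Subgroup.quotientMapOfLE hσ.le '' (QuotientGroup.mk '' U))
  have hdc : ∀ T ⊆ R₂, ∀ s ∈ T, ∀ t ∈ T, s ≠ t → dcoset H s ≠ dcoset H t :=
    fun T hT s hs t ht => hσ.dcoset_ne s (hσ.mem_of_mem_right (hT hs)) t
      (hσ.mem_of_mem_right (hT ht))
  have hin : ∑ s ∈ R₂.filter (· ∈ K), dval H s ≤ ((𝒩 \ ℬ) ∩ W).ncard :=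
    (sum_dval_le_ncard (Y := QuotientGroup.mk '' U) (hdc _ (Finset.filter_subset _ _))
      fun t ht => Set.image_mono fun u hu =>
        ⟨t, (Finset.mem_filter.1 ht).1, (Finset.mem_filter.1 ht).2, hu⟩).trans
    (ncard_image_mk_le_ncard_Nout_sdiff_inter_blocks hHK hσ.le
      (by rintro _ ⟨s, -, hsK, hu⟩; exact (mem_iff_of_mem_dcoset hHK hu).2 hsK)
      (by rintro _ ⟨s, hs, -, hu⟩ hG'
          exact hσ.notMem s hs ((mem_iff_of_mem_dcoset hσ.le hu).1 hG'))
      (hσ.relIndex_inf_le_ncard_Nout_inter hHK hns))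
  have hout : ∑ s ∈ R₂.filter (· ∉ K), dval H s ≤ ((𝒩 \ ℬ) \ W).ncard :=
    sum_dval_le_ncard (hdc _ (Finset.filter_subset _ _)) fun t ht =>
      hσ.image_mk_dcoset_subset_Nout_sdiff hHK (Finset.mem_filter.1 ht).1
        (Finset.mem_filter.1 ht).2
  have := Finset.sum_filter_add_sum_filter_not R₂ (· ∈ K) (dval H)
  have := Set.ncard_inter_add_ncard_sdiff_eq_ncard 𝒩 ℬ
  have := Set.ncard_inter_add_ncard_sdiff_eq_ncard (𝒩 \ ℬ) W
  have := hσ.kappa_le_ncard_Nout_inter hns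
  omega

theorem min_le_ncard_Nout (hHK : H ≤ K) (hK : IsPart (cayleyRel H S) 𝒜) :
    min (H.relIndex G')
      (kappa (cayleyRel (H.subgroupOf G') (Subtype.val ⁻¹' (R₁ : Set G))) + ∑ s ∈ R₂, dval H s) ≤
      (𝒩).ncard := by
  by_cases hsat : ℬ ⊆ 𝒜 ∪ 𝒩
  · exact min_le_of_left_le
      (relIndex_le_ncard_Nout_of_subset hσ.closure_eq_top hHK hσ.le hK hsat)
  · exact min_le_of_right_le (hσ.kappa_add_sum_dval_le_ncard_Nout hHK hsat)

theorem min_le_kappa {A B : Set (G ⧸ H)} (hA : IsAtomD (cayleyRel H S) A)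
    (hB : IsAtomD (flip (cayleyRel H S)) B) (hAB : A.ncard ≤ B.ncard) :
    min (H.relIndex G')
      (kappa (cayleyRel (H.subgroupOf G') (Subtype.val ⁻¹' (R₁ : Set G))) + ∑ s ∈ R₂, dval H s) ≤
      kappa (cayleyRel H S) := by
  obtain ⟨K, hHK, hK⟩ := exists_subgroup_isAtomD hA hB hAB
  exact hK.2.1 ▸ hσ.min_le_ncard_Nout hHK hK.1

theorem min_le_card_sub_one :
    min (H.relIndex G')
      (kappa (cayleyRel (H.subgroupOf G') (Subtype.val ⁻¹' (R₁ : Set G))) + ∑ s ∈ R₂, dval H s) ≤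
      Nat.card (G ⧸ H) - 1 := by
  by_cases hG' : G' = ⊤
  · have hR₂ : R₂ = ∅ :=
      Finset.eq_empty_of_forall_notMem fun r hr => hσ.notMem r hr (hG' ▸ trivial)
    subst hG' hR₂
    refine min_le_of_right_le ?_
    rw [Finset.sum_empty, add_zero, ← Subgroup.index_eq_card, ← Subgroup.relIndex_top_right]
    exact kappa_le_card_sub_one
  · have hmul := Subgroup.relIndex_mul_index hσ.le
    have h2 := Subgroup.one_lt_index_of_ne_top hG'
    have hq : H.relIndex G' ≠ 0 := (H.subgroupOf G').index_ne_zero_of_finite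
    refine min_le_of_left_le ?_
    rw [← Subgroup.index_eq_card, ← hmul]
    have := Nat.mul_le_mul_left (H.relIndex G') h2
    omega

end IsAdmissibleSplit

end Splitting

theorem stmt_10_general {G : Type*} [Group G] [Finite G] (H : Subgroup G) (S R₁ R₂ : Finset G)
    (hdc : ∀ s ∈ S, ∀ t ∈ S, s ≠ t → dcoset H s ≠ dcoset H t)
    (hconn : SC (cayleyRel H (S : Set G)))
    (hunion : R₁ ∪ R₂ = S)
    (G' : Subgroup G) (hG' : G' = Subgroup.closure ((H : Set G) ∪ (R₁ : Set G)))
    (hR₂ : ∀ r ∈ R₂, r ∉ G')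
    (hsame : ∀ r ∈ R₂, ∀ t ∈ R₂, dcoset G' r = dcoset G' t →
      Subgroup.closure ((H : Set G) ∪ {r}) = Subgroup.closure ((H : Set G) ∪ {t})) :
    min (Nat.card (G' ⧸ H.subgroupOf G'))
      (kappa (cayleyRel (H.subgroupOf G')
          ((Subtype.val ⁻¹' (R₁ : Set G)) : Set G')) + ∑ s ∈ R₂, dval H s) ≤
    kappa (cayleyRel H (S : Set G)) := by
  have hσ : IsAdmissibleSplit H S R₁ R₂ G' :=
    ⟨hdc, closure_eq_top_of_sc hconn, hunion, hG', hR₂, hsame⟩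
  by_cases hsep : ∃ T : Set (G ⧸ H), ¬ SCOn (cayleyRel H S) Tᶜ
  · obtain ⟨A, hA⟩ := exists_isAtomD hsep
    obtain ⟨B, hB⟩ := exists_isAtomD (E := flip (cayleyRel H S)) (by simpa only [scOn_flip_iff])
    rcases le_total A.ncard B.ncard with hAB | hBA
    · exact hσ.min_le_kappa hA hB hAB
    · -- the reverse digraph is `𝒢(G, H, S⁻¹)`, whose atoms are the smaller ones
      have h := hσ.inv.min_le_kappa (A := B) (B := A) (by rwa [Finset.coe_inv, cayleyRel_inv])
        (by rwa [Finset.coe_inv, cayleyRel_inv]) hBA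
      have hκ' : kappa (cayleyRel (H.subgroupOf G') (Subtype.val ⁻¹' (R₁ : Set G)⁻¹)) =
          kappa (cayleyRel (H.subgroupOf G') (Subtype.val ⁻¹' (R₁ : Set G))) :=
        kappa_cayleyRel_inv (Subtype.val ⁻¹' (R₁ : Set G) : Set G')
      simp only [Finset.coe_inv, Finset.sum_inv_index, dval_inv] at h
      rwa [kappa_cayleyRel_inv, hκ'] at h
  · rw [kappa_eq_card_sub_one hsep]
    exact hσ.min_le_card_sub_one

/-- Main theorem: if `R₁, R₂` partition `S`, the subgroup `G' = ⟨H ∪ R₁⟩ contains no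
element of `R₂`, and generators of `R₂` lying in the same double coset of `G'`
generate with `H` the same subgroup, then
`κ(𝒢) ≥ min(|G'/H|, κ(𝒢') + d_{R₂})` where `𝒢' = 𝒢(G',H,R₁)`. -/
theorem stmt_10 {G : Type*} [Group G] [Finite G] (H : Subgroup G) (S R₁ R₂ : Finset G)
    (hSH : ∀ s ∈ S, s ∉ H)
    (hdc : ∀ s ∈ S, ∀ t ∈ S, s ≠ t → dcoset H s ≠ dcoset H t)
    (hconn : SC (cayleyRel H (S : Set G)))
    (hunion : R₁ ∪ R₂ = S) (hdisj : Disjoint R₁ R₂)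
    (G' : Subgroup G) (hG' : G' = Subgroup.closure ((H : Set G) ∪ (R₁ : Set G)))
    (hR₂ : ∀ r ∈ R₂, r ∉ G')
    (hsame : ∀ r ∈ R₂, ∀ t ∈ R₂, dcoset G' r = dcoset G' t →
      Subgroup.closure ((H : Set G) ∪ {r}) = Subgroup.closure ((H : Set G) ∪ {t})) :
    min (Nat.card (G' ⧸ H.subgroupOf G'))
      (kappa (cayleyRel (H.subgroupOf G')
          ((Subtype.val ⁻¹' (R₁ : Set G)) : Set G')) + ∑ s ∈ R₂, dval H s) ≤
    kappa (cayleyRel H (S : Set G)) :=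
  stmt_10_general H S R₁ R₂ hdc hconn hunion G' hG' hR₂ hsame
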